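/- arXiv:1302.3785 — 3 statements merged into one kernel-verified Lean document; each statement's English description precedes it below -/
import Mathlib

section
/- The integral over the plane of the product of two translated, rotated, anisotropically scaled Gaussian atoms φ_{γ_j}(X) = exp(-(σ_j^{-1}Ψ_j^{-1}(X-τ_j))^T(σ_j^{-1}Ψ_j^{-1}(X-τ_j))) and φ_{γ_k}(X) (defined analogously) equals (π|σ_j σ_k| / (2 √|Σ_{jk}|)) · exp(-(1/2)(τ_k-τ_j)^T Σ_{jk}^{-1} (τ_k-τ_j)), where Σ_{jk} = (1/2)(Ψ_j σ_j² Ψ_j^{-1} + Ψ_k σ_k² Ψ_k^{-1}). -/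
open MeasureTheory Real Matrix

/-- Rotation matrix with angle ψ. -/
noncomputable def rotM (ψ : ℝ) : Matrix (Fin 2) (Fin 2) ℝ :=
  !![Real.cos ψ, -Real.sin ψ; Real.sin ψ, Real.cos ψ]

/-- Diagonal anisotropic scaling matrix. -/
noncomputable def sclM (sx sy : ℝ) : Matrix (Fin 2) (Fin 2) ℝ :=
  !![sx, 0; 0, sy]

/-- Gaussian atom φ_γ(X) = exp(-(σ⁻¹Ψ⁻¹(X-τ))ᵀ(σ⁻¹Ψ⁻¹(X-τ))). -/
noncomputable def gAtom (Ψ σ : Matrix (Fin 2) (Fin 2) ℝ) (τ : Fin 2 → ℝ)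
    (X : Fin 2 → ℝ) : ℝ :=
  Real.exp (-((σ⁻¹ * Ψ⁻¹).mulVec (X - τ) ⬝ᵥ (σ⁻¹ * Ψ⁻¹).mulVec (X - τ)))

/-!
Each atom is `exp (-(X - τ) ⬝ C⁻¹ (X - τ))` for the covariance `C = Ψ σ² Ψ⁻¹`. Completing the
square, the sum of the two quadratic forms is the form of `Cⱼ⁻¹ + Cₖ⁻¹` at a shifted point plus a
constant whose matrix is `Cⱼ⁻¹ (Cⱼ⁻¹ + Cₖ⁻¹)⁻¹ Cₖ⁻¹ = (Cⱼ + Cₖ)⁻¹ = (2 Σ)⁻¹`. A Gaussian integral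
over `ℝⁿ` with positive definite form `A = Bᵀ B` is `√π ^ n / √(det A)`, by the change of variables
`X ↦ B X`, and `det (Cⱼ⁻¹ + Cₖ⁻¹) = det (Cⱼ + Cₖ) / (det Cⱼ det Cₖ)`.
-/

section

variable {ι : Type*} [Fintype ι]

theorem integral_exp_neg_dotProduct_self :
    ∫ x : ι → ℝ, exp (-(x ⬝ᵥ x)) = √π ^ Fintype.card ι := by
  have h : ∀ x : ι → ℝ, exp (-(x ⬝ᵥ x)) = ∏ i, exp (-1 * x i ^ 2) := by
    intro x
    simp only [dotProduct, ← Finset.sum_neg_distrib, Real.exp_sum, neg_one_mul, sq]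
  simp_rw [h]
  rw [volume_pi, integral_fintype_prod_eq_prod (fun _ x => exp (-1 * x ^ 2)), integral_gaussian]
  simp

theorem mulVec_dotProduct_mulVec_self (B : Matrix ι ι ℝ) (v : ι → ℝ) :
    B *ᵥ v ⬝ᵥ B *ᵥ v = v ⬝ᵥ (Bᵀ * B) *ᵥ v := by
  rw [← mulVec_mulVec, dotProduct_mulVec v, vecMul_transpose]

theorem Matrix.IsSymm.dotProduct_mulVec_comm {M : Matrix ι ι ℝ} (hM : M.IsSymm) (u v : ι → ℝ) :
    u ⬝ᵥ M *ᵥ v = v ⬝ᵥ M *ᵥ u := by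
  rw [dotProduct_mulVec, ← mulVec_transpose, hM.eq, dotProduct_comm]

variable [DecidableEq ι]

theorem integral_comp_mulVec {E : Type*} [NormedAddCommGroup E] [NormedSpace ℝ E]
    {B : Matrix ι ι ℝ} (hB : IsUnit B.det) (f : (ι → ℝ) → E) :
    ∫ x, f (B *ᵥ x) = |B.det|⁻¹ • ∫ y, f y := by
  let e := (B.toLinearEquiv' (B.invertibleOfIsUnitDet hB)).toContinuousLinearEquiv.toHomeomorph
  have hmap : Measure.map e volume = ENNReal.ofReal |B.det|⁻¹ • volume := by
    change Measure.map (toLin' B) volume = _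
    simpa [LinearMap.det_toLin'] using Measure.map_linearMap_addHaar_pi_eq_smul_addHaar
      (f := toLin' B) (by simpa using hB.ne_zero) volume
  change ∫ x, f (e x) = _
  rw [← e.measurableEmbedding.integral_map, hmap, integral_smul_measure]
  simp

open scoped MatrixOrder in
theorem integral_exp_neg_dotProduct_mulVec {A : Matrix ι ι ℝ} (hA : A.PosDef) :
    ∫ x, exp (-(x ⬝ᵥ A *ᵥ x)) = √π ^ Fintype.card ι / √A.det := by
  obtain ⟨B, rfl⟩ := CStarAlgebra.nonneg_iff_eq_star_mul_self.mp hA.posSemidef.nonneg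
  have hdet : (star B * B).det = B.det ^ 2 := by
    rw [det_mul, star_eq_conjTranspose, det_conjTranspose, star_trivial, sq]
  have hB : B.det ≠ 0 := fun h => by simpa [hdet, h] using hA.det_pos
  rw [hdet, sqrt_sq_eq_abs, star_eq_conjTranspose, conjTranspose_eq_transpose_of_trivial]
  simp_rw [← mulVec_dotProduct_mulVec_self]
  rw [integral_comp_mulVec hB.isUnit (fun y => exp (-(y ⬝ᵥ y))), integral_exp_neg_dotProduct_self,
    smul_eq_mul, inv_mul_eq_div]

theorem dotProduct_mulVec_add_dotProduct_mulVec_sub {A B : Matrix ι ι ℝ} (hA : A.IsSymm)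
    (hB : B.IsSymm) (hAB : IsUnit (A + B).det) (y d : ι → ℝ) :
    y ⬝ᵥ A *ᵥ y + (y - d) ⬝ᵥ B *ᵥ (y - d) =
      (y - (A + B)⁻¹ *ᵥ B *ᵥ d) ⬝ᵥ (A + B) *ᵥ (y - (A + B)⁻¹ *ᵥ B *ᵥ d)
        + d ⬝ᵥ (A * (A + B)⁻¹ * B) *ᵥ d := by
  set w := (A + B)⁻¹ *ᵥ B *ᵥ d
  have hw : (A + B) *ᵥ w = B *ᵥ d := by
    simp only [w, mulVec_mulVec, mul_nonsing_inv_cancel_left _ _ hAB]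
  have hAw : (A * (A + B)⁻¹ * B) *ᵥ d = A *ᵥ w := by simp only [w, mulVec_mulVec, mul_assoc]
  have hyw := congrArg (y ⬝ᵥ ·) hw
  have hdw := congrArg (d ⬝ᵥ ·) hw
  have hww := congrArg (w ⬝ᵥ ·) hw
  have hwy := IsSymm.dotProduct_mulVec_comm (hA.add hB) w y
  have hwd := hB.dotProduct_mulVec_comm w d
  have hdy := hB.dotProduct_mulVec_comm d y
  rw [hAw]
  simp only [mulVec_sub, sub_dotProduct, dotProduct_sub, add_mulVec, dotProduct_add]
    at hyw hdw hww hwy ⊢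
  linarith

theorem inv_add_inv_eq_mul_add_mul {C D : Matrix ι ι ℝ} (hC : IsUnit C.det) (hD : IsUnit D.det) :
    C⁻¹ + D⁻¹ = D⁻¹ * (C + D) * C⁻¹ := by
  rw [mul_add, add_mul, mul_nonsing_inv_cancel_right _ _ hC, nonsing_inv_mul _ hD, one_mul,
    add_comm]

theorem inv_mul_inv_add_inv_mul_inv {C D : Matrix ι ι ℝ} (hC : IsUnit C.det) (hD : IsUnit D.det) :
    C⁻¹ * (C⁻¹ + D⁻¹)⁻¹ * D⁻¹ = (C + D)⁻¹ := by
  rw [inv_add_inv_eq_mul_add_mul hC hD, Matrix.mul_inv_rev, Matrix.mul_inv_rev,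
    nonsing_inv_nonsing_inv _ hC, nonsing_inv_nonsing_inv _ hD, ← mul_assoc, ← mul_assoc,
    nonsing_inv_mul _ hC, one_mul, mul_assoc, mul_nonsing_inv _ hD, mul_one]

theorem det_inv_add_inv {C D : Matrix ι ι ℝ} (hC : IsUnit C.det) (hD : IsUnit D.det) :
    (C⁻¹ + D⁻¹).det = (C + D).det / (C.det * D.det) := by
  rw [inv_add_inv_eq_mul_add_mul hC hD, det_mul, det_mul, det_nonsing_inv, det_nonsing_inv]
  simp only [Ring.inverse_eq_inv']
  field_simp

theorem integral_exp_neg_mul_exp_neg_dotProduct_inv_mulVec {C D : Matrix ι ι ℝ} (hC : C.PosDef)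
    (hD : D.PosDef) (a b : ι → ℝ) :
    ∫ x, exp (-((x - a) ⬝ᵥ C⁻¹ *ᵥ (x - a))) * exp (-((x - b) ⬝ᵥ D⁻¹ *ᵥ (x - b))) =
      √π ^ Fintype.card ι * √(C.det * D.det) / √(C + D).det *
        exp (-((b - a) ⬝ᵥ (C + D)⁻¹ *ᵥ (b - a))) := by
  have hCu : IsUnit C.det := hC.det_pos.ne'.isUnit
  have hDu : IsUnit D.det := hD.det_pos.ne'.isUnit
  have hS : (C⁻¹ + D⁻¹).PosDef := hC.inv.add hD.inv
  set w := (C⁻¹ + D⁻¹)⁻¹ *ᵥ D⁻¹ *ᵥ (b - a)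
  have hsplit : ∀ x, exp (-((x - a) ⬝ᵥ C⁻¹ *ᵥ (x - a))) * exp (-((x - b) ⬝ᵥ D⁻¹ *ᵥ (x - b))) =
      exp (-((x - (a + w)) ⬝ᵥ (C⁻¹ + D⁻¹) *ᵥ (x - (a + w)))) *
        exp (-((b - a) ⬝ᵥ (C + D)⁻¹ *ᵥ (b - a))) := by
    intro x
    rw [← exp_add, ← exp_add, ← neg_add, ← neg_add, ← sub_sub_sub_cancel_right x b a,
      dotProduct_mulVec_add_dotProduct_mulVec_sub (isHermitian_iff_isSymm.mp hC.inv.isHermitian)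
        (isHermitian_iff_isSymm.mp hD.inv.isHermitian) hS.det_pos.ne'.isUnit,
      inv_mul_inv_add_inv_mul_inv hCu hDu, sub_sub]
  simp_rw [hsplit]
  rw [integral_mul_const, integral_sub_right_eq_self (fun x => exp (-(x ⬝ᵥ (C⁻¹ + D⁻¹) *ᵥ x))),
    integral_exp_neg_dotProduct_mulVec hS, det_inv_add_inv hCu hDu,
    sqrt_div (hC.add hD).det_pos.le, div_div_eq_mul_div]

end

theorem gAtom_eq_exp_neg_dotProduct_inv_mulVec {Ψ σ : Matrix (Fin 2) (Fin 2) ℝ}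
    (hΨ : Ψᵀ * Ψ = 1) (hσ : σ.IsSymm) (τ X : Fin 2 → ℝ) :
    gAtom Ψ σ τ X = exp (-((X - τ) ⬝ᵥ (Ψ * σ ^ 2 * Ψ⁻¹)⁻¹ *ᵥ (X - τ))) := by
  have hinv : Ψ⁻¹ = Ψᵀ := inv_eq_left_inv hΨ
  have hunit : IsUnit Ψ.det := isUnit_det_of_left_inverse hΨ
  rw [gAtom, mulVec_dotProduct_mulVec_self, Matrix.mul_inv_rev, Matrix.mul_inv_rev,
    nonsing_inv_nonsing_inv _ hunit, transpose_mul, hinv, transpose_transpose,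
    transpose_nonsing_inv, hσ.eq, ← inv_pow', sq, mul_assoc, mul_assoc]

theorem rotM_transpose_mul_self (ψ : ℝ) : (rotM ψ)ᵀ * rotM ψ = 1 := by
  ext i j
  fin_cases i <;> fin_cases j <;> simp [rotM, mul_apply, ← sq, mul_comm]

theorem det_rotM (ψ : ℝ) : (rotM ψ).det = 1 := by
  rw [rotM, det_fin_two_of]; ring_nf; simp

theorem isSymm_sclM (sx sy : ℝ) : (sclM sx sy).IsSymm := by
  ext i j
  fin_cases i <;> fin_cases j <;> rfl

theorem det_sclM (sx sy : ℝ) : (sclM sx sy).det = sx * sy := by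
  rw [sclM, det_fin_two_of]; ring

theorem posDef_rotM_mul_sclM_sq_mul_inv (ψ : ℝ) {sx sy : ℝ} (hx : sx ≠ 0) (hy : sy ≠ 0) :
    (rotM ψ * sclM sx sy ^ 2 * (rotM ψ)⁻¹).PosDef := by
  have hfactor : rotM ψ * sclM sx sy ^ 2 * (rotM ψ)⁻¹
      = rotM ψ * sclM sx sy * (rotM ψ * sclM sx sy)ᴴ := by
    rw [conjTranspose_eq_transpose_of_trivial, transpose_mul, (isSymm_sclM sx sy).eq,
      inv_eq_left_inv (rotM_transpose_mul_self ψ), sq, mul_assoc, mul_assoc, mul_assoc]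
  rw [hfactor]
  refine PosDef.mul_conjTranspose_self _ (vecMul_injective_iff_isUnit.mpr ?_)
  rw [isUnit_iff_isUnit_det, det_mul, det_rotM, det_sclM, one_mul]
  exact (mul_ne_zero hx hy).isUnit

theorem det_rotM_mul_sclM_sq_mul_inv (ψ sx sy : ℝ) :
    (rotM ψ * sclM sx sy ^ 2 * (rotM ψ)⁻¹).det = (sx * sy) ^ 2 := by
  rw [det_conj ((isUnit_iff_isUnit_det _).mpr (by simp [det_rotM])), det_pow, det_sclM]

theorem stmt0 (ψj ψk sxj syj sxk syk : ℝ) (τj τk : Fin 2 → ℝ)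
    (hxj : 0 < sxj) (hyj : 0 < syj) (hxk : 0 < sxk) (hyk : 0 < syk)
    (Sjk : Matrix (Fin 2) (Fin 2) ℝ)
    (hS : Sjk = (1/2 : ℝ) •
      (rotM ψj * (sclM sxj syj) ^ 2 * (rotM ψj)⁻¹
        + rotM ψk * (sclM sxk syk) ^ 2 * (rotM ψk)⁻¹)) :
    (∫ X : Fin 2 → ℝ,
        gAtom (rotM ψj) (sclM sxj syj) τj X * gAtom (rotM ψk) (sclM sxk syk) τk X)
      = (π * |((sclM sxj syj) * (sclM sxk syk)).det| / (2 * Real.sqrt Sjk.det)) *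
          Real.exp (-(1/2 : ℝ) * ((τk - τj) ⬝ᵥ Sjk⁻¹.mulVec (τk - τj))) := by
  have hCj := posDef_rotM_mul_sclM_sq_mul_inv ψj hxj.ne' hyj.ne'
  have hCk := posDef_rotM_mul_sclM_sq_mul_inv ψk hxk.ne' hyk.ne'
  have hsum : rotM ψj * sclM sxj syj ^ 2 * (rotM ψj)⁻¹ + rotM ψk * sclM sxk syk ^ 2 * (rotM ψk)⁻¹
      = (2 : ℝ) • Sjk := by
    rw [hS, smul_smul]; norm_num
  have hdetS : 0 < Sjk.det := by
    have h := (hCj.add hCk).det_pos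
    rw [hsum, det_smul] at h
    exact pos_of_mul_pos_right h (by positivity)
  simp_rw [gAtom_eq_exp_neg_dotProduct_inv_mulVec (rotM_transpose_mul_self _) (isSymm_sclM _ _)]
  rw [integral_exp_neg_mul_exp_neg_dotProduct_inv_mulVec hCj hCk, hsum,
    det_rotM_mul_sclM_sq_mul_inv, det_rotM_mul_sclM_sq_mul_inv, det_smul, Fintype.card_fin,
    Matrix.inv_smul Sjk (2 : ℝ) hdetS.ne'.isUnit, det_mul, det_sclM, det_sclM]
  rw [sq_sqrt pi_pos.le, ← mul_pow, sqrt_sq_eq_abs, sqrt_mul (by norm_num), sqrt_sq (by norm_num),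
    smul_mulVec, dotProduct_smul, smul_eq_mul, invOf_eq_inv]
  ring_nf
end

section
/- Suppose f, h : ℝ² → ℝ are twice continuously differentiable, f has its global minimum at 0 with ∇f(0)=0, and g = f + h has a global minimum at t₀T₀ with t₀ ≥ 0 and T₀ ∈ S¹. Then there exist t₁, t₂ ∈ [0, t₀] such that (t₀²/2)·( f''(t₁T₀; T₀) + f''(t₂T₀; T₀) + h''(t₁T₀; T₀) ) = |h(0) - h(t₀T₀)|, where f''(x; T) denotes the second directional derivative of f along direction T at point x. -/
/-!
Everything happens on the ray `s ↦ s • T₀`. Put `F s = f (s • T₀)`, `H s = h (s • T₀)` and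
`G = F + H`. Then `F' 0 = 0` and `G' t₀ = 0` (global minima), so second-order Taylor expansion of
`F` at `0` and of `G` at `t₀` give `F t₀ - F 0 = F'' t₂ t₀² / 2` and
`G 0 - G t₀ = G'' t₁ t₀² / 2`. Their sum is `H 0 - H t₀`, which is nonnegative since both summands
are.
-/

open Set

theorem exists_sub_eq_iteratedDeriv_two_of_hasDerivAt_zero {F : ℝ → ℝ} {a b : ℝ} (hab : a ≠ b)
    (hF : ContDiffOn ℝ 2 F (uIcc a b)) (hFa : HasDerivAt F 0 a) :
    ∃ c ∈ uIoo a b, F b - F a = iteratedDeriv 2 F c * (b - a) ^ 2 / 2 := by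
  obtain ⟨c, hc, hTaylor⟩ := taylor_mean_remainder_lagrange_iteratedDeriv (n := 1) hab hF
  have hderiv : derivWithin F (uIcc a b) a = 0 :=
    hFa.hasDerivWithinAt.derivWithin (uniqueDiffOn_uIcc hab a left_mem_uIcc)
  rw [taylorWithinEval_succ, taylor_within_zero_eval, iteratedDerivWithin_one, hderiv] at hTaylor
  refine ⟨c, hc, ?_⟩
  simpa [Nat.factorial] using hTaylor

theorem exists_taylor_identity_of_perturbed_min {F H : ℝ → ℝ} {t₀ : ℝ}
    (hF : ContDiff ℝ 2 F) (hH : ContDiff ℝ 2 H) (hF0 : HasDerivAt F 0 0)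
    (hFmin : F 0 ≤ F t₀) (hGmin : ∀ s, F t₀ + H t₀ ≤ F s + H s) (ht₀ : 0 ≤ t₀) :
    ∃ t₁ ∈ Icc 0 t₀, ∃ t₂ ∈ Icc 0 t₀,
      t₀ ^ 2 / 2 * (iteratedDeriv 2 F t₁ + iteratedDeriv 2 F t₂ + iteratedDeriv 2 H t₁)
        = |H 0 - H t₀| := by
  rcases ht₀.eq_or_lt with rfl | ht₀
  · exact ⟨0, left_mem_Icc.2 le_rfl, 0, left_mem_Icc.2 le_rfl, by simp⟩
  have hG : ContDiff ℝ 2 (F + H) := hF.add hH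
  have hGt₀ : HasDerivAt (F + H) 0 t₀ := by
    have hdiff := (hG.differentiable two_ne_zero t₀).hasDerivAt
    have hmin : IsLocalMin (F + H) t₀ := Filter.Eventually.of_forall hGmin
    rwa [hmin.hasDerivAt_eq_zero hdiff] at hdiff
  obtain ⟨t₂, ht₂, hFt₂⟩ :=
    exists_sub_eq_iteratedDeriv_two_of_hasDerivAt_zero ht₀.ne hF.contDiffOn hF0
  obtain ⟨t₁, ht₁, hGt₁⟩ :=
    exists_sub_eq_iteratedDeriv_two_of_hasDerivAt_zero ht₀.ne' hG.contDiffOn hGt₀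
  rw [uIoo_of_le ht₀.le] at ht₂
  rw [uIoo_of_ge ht₀.le] at ht₁
  rw [iteratedDeriv_add hF.contDiffAt hH.contDiffAt] at hGt₁
  simp only [Pi.add_apply] at hGt₁
  have hH_drop : H t₀ ≤ H 0 := by linarith [hGmin 0]
  refine ⟨t₁, Ioo_subset_Icc_self ht₁, t₂, Ioo_subset_Icc_self ht₂, ?_⟩
  rw [abs_of_nonneg (sub_nonneg.2 hH_drop)]
  linear_combination -(hGt₁ + hFt₂)

theorem ContDiff.comp_smul_const {E : Type*} [NormedAddCommGroup E] [NormedSpace ℝ E]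
    {f : E → ℝ} {n : WithTop ℕ∞} (hf : ContDiff ℝ n f) (v : E) :
    ContDiff ℝ n (fun s : ℝ => f (s • v)) :=
  hf.comp (contDiff_id.smul contDiff_const)

theorem HasGradientAt.hasDerivAt_comp_smul_const {E : Type*} [NormedAddCommGroup E]
    [InnerProductSpace ℝ E] [CompleteSpace E] {f : E → ℝ} {f' : E} {s : ℝ} (v : E)
    (hf : HasGradientAt f f' (s • v)) :
    HasDerivAt (fun t : ℝ => f (t • v)) (inner ℝ f' v) s := by
  have hline : HasDerivAt (fun t : ℝ => t • v) v s := by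
    simpa using (hasDerivAt_id s).smul_const v
  have hcomp := (hasGradientAt_iff_hasFDerivAt.1 hf).comp_hasDerivAt s hline
  rwa [InnerProductSpace.toDual_apply_apply] at hcomp

theorem stmt7_general (f h : EuclideanSpace ℝ (Fin 2) → ℝ)
    (hf : ContDiff ℝ 2 f) (hh : ContDiff ℝ 2 h)
    (hfmin : ∀ x, f 0 ≤ f x) (hgrad0 : gradient f 0 = 0)
    (t₀ : ℝ) (T₀ : EuclideanSpace ℝ (Fin 2)) (ht₀ : 0 ≤ t₀)
    (hgmin : ∀ x, f (t₀ • T₀) + h (t₀ • T₀) ≤ f x + h x) :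
    ∃ t₁ ∈ Set.Icc (0:ℝ) t₀, ∃ t₂ ∈ Set.Icc (0:ℝ) t₀,
      (t₀ ^ 2 / 2) *
          (iteratedDeriv 2 (fun s => f (s • T₀)) t₁
            + iteratedDeriv 2 (fun s => f (s • T₀)) t₂
            + iteratedDeriv 2 (fun s => h (s • T₀)) t₁)
        = |h 0 - h (t₀ • T₀)| := by
  have hgrad : HasGradientAt f 0 ((0 : ℝ) • T₀) := by
    simpa [hgrad0] using (hf.differentiable two_ne_zero 0).hasGradientAt
  have hF0 := hgrad.hasDerivAt_comp_smul_const T₀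
  rw [inner_zero_left] at hF0
  simpa using exists_taylor_identity_of_perturbed_min (hf.comp_smul_const T₀)
    (hh.comp_smul_const T₀) hF0 (by simpa using hfmin (t₀ • T₀)) (fun s => hgmin (s • T₀)) ht₀

/-- Taylor identity for the perturbed global minimum (Eq. (4.6) of the paper):
there exist t₁, t₂ ∈ [0, t₀] with
(t₀²/2)(f''(t₁T₀;T₀) + f''(t₂T₀;T₀) + h''(t₁T₀;T₀)) = |h(0) - h(t₀T₀)|. -/
theorem stmt7 (f h : EuclideanSpace ℝ (Fin 2) → ℝ)
    (hf : ContDiff ℝ 2 f) (hh : ContDiff ℝ 2 h)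
    (hfmin : ∀ x, f 0 ≤ f x) (hgrad0 : gradient f 0 = 0)
    (t₀ : ℝ) (T₀ : EuclideanSpace ℝ (Fin 2)) (ht₀ : 0 ≤ t₀) (hT₀ : ‖T₀‖ = 1)
    (hgmin : ∀ x, f (t₀ • T₀) + h (t₀ • T₀) ≤ f x + h x) :
    ∃ t₁ ∈ Set.Icc (0:ℝ) t₀, ∃ t₂ ∈ Set.Icc (0:ℝ) t₀,
      (t₀ ^ 2 / 2) *
          (iteratedDeriv 2 (fun s => f (s • T₀)) t₁
            + iteratedDeriv 2 (fun s => f (s • T₀)) t₂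
            + iteratedDeriv 2 (fun s => h (s • T₀)) t₁)
        = |h 0 - h (t₀ • T₀)| :=
  stmt7_general f h hf hh hfmin hgrad0 t₀ T₀ ht₀ hgmin
end

section
/- Suppose f : ℝ² → ℝ is twice continuously differentiable with global minimum at 0, h : ℝ² → ℝ is twice continuously differentiable, and g = f + h has global minimum at t₀T₀ with t₀ ≤ t̄₀. Assume: (i) the second directional derivative of f along any unit direction T satisfies f''(tT;T) ≥ r₀ > 0 for all t ∈ [0, t̄₀]; (ii) |h''(tT;T)| ≤ B₂ for all t ∈ [0, t̄₀] and all unit T, with B₂ < r₀; and (iii) |h(0) - h(t₀T₀)| ≤ B₀. Then t₀ ≤ √(2B₀/(r₀ - B₂)). -/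
/-!
Restricted to the ray through `T₀`, `f` has a critical point at `0` and second derivative at
least `r₀`, so `f (t₀ • T₀) - f 0 ≥ r₀ t₀² / 2` by Taylor's theorem. Minimality of `f + h` at
`t₀ • T₀` bounds the same gap by `h 0 - h (t₀ • T₀) ≤ B₀`. Hence `t₀² ≤ 2 B₀ / r₀`, and
`r₀ - B₂ ≤ r₀` since `B₂` bounds an absolute value.
-/

open Set

theorem add_deriv_mul_add_le_of_le_iteratedDeriv_two {F : ℝ → ℝ} (hF : ContDiff ℝ 2 F)
    {a b r : ℝ} (hab : a ≤ b) (hr : ∀ t ∈ Icc a b, r ≤ iteratedDeriv 2 F t) :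
    F a + deriv F a * (b - a) + r * (b - a) ^ 2 / 2 ≤ F b := by
  rcases hab.eq_or_lt with rfl | hlt
  · simp
  obtain ⟨c, hc, hTaylor⟩ :=
    taylor_mean_remainder_lagrange_iteratedDeriv (n := 1) hlt.ne hF.contDiffOn
  rw [uIoo_of_le hab] at hc
  rw [uIcc_of_le hab] at hTaylor
  have hderiv : derivWithin F (Icc a b) a = deriv F a :=
    (hF.differentiable two_ne_zero a).derivWithin
      ((uniqueDiffOn_Icc hlt).uniqueDiffWithinAt (left_mem_Icc.2 hab))
  norm_num [taylorWithinEval_succ, hderiv] at hTaylor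
  nlinarith [hr c (Ioo_subset_Icc_self hc), sq_nonneg (b - a)]

theorem apply_zero_add_mul_sq_div_two_le_apply_smul {E : Type*} [NormedAddCommGroup E]
    [NormedSpace ℝ E] {f : E → ℝ} (hf : ContDiff ℝ 2 f) (hmin : ∀ x, f 0 ≤ f x) (T : E)
    {t r : ℝ} (ht : 0 ≤ t) (hr : ∀ s ∈ Icc 0 t, r ≤ iteratedDeriv 2 (fun s => f (s • T)) s) :
    f 0 + r * t ^ 2 / 2 ≤ f (t • T) := by
  have hray : ContDiff ℝ 2 (fun s : ℝ => f (s • T)) := hf.comp (contDiff_id.smul contDiff_const)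
  have hcrit : deriv (fun s : ℝ => f (s • T)) 0 = 0 :=
    IsLocalMin.deriv_eq_zero <| Filter.Eventually.of_forall fun s => by simpa using hmin (s • T)
  simpa [hcrit] using add_deriv_mul_add_le_of_le_iteratedDeriv_two hray ht hr

theorem stmt8_general (f h : EuclideanSpace ℝ (Fin 2) → ℝ)
    (hf : ContDiff ℝ 2 f)
    (hfmin : ∀ x, f 0 ≤ f x)
    (t₀ tb₀ r₀ B₀ B₂ : ℝ) (T₀ : EuclideanSpace ℝ (Fin 2))
    (ht₀ : 0 ≤ t₀) (hT₀ : ‖T₀‖ = 1)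
    (hgmin : ∀ x, f (t₀ • T₀) + h (t₀ • T₀) ≤ f x + h x)
    (htle : t₀ ≤ tb₀)
    (hfdd : ∀ (T : EuclideanSpace ℝ (Fin 2)) (t : ℝ), ‖T‖ = 1 → t ∈ Set.Icc 0 tb₀ →
      r₀ ≤ iteratedDeriv 2 (fun s => f (s • T)) t)
    (hhdd : ∀ (T : EuclideanSpace ℝ (Fin 2)) (t : ℝ), ‖T‖ = 1 → t ∈ Set.Icc 0 tb₀ →
      |iteratedDeriv 2 (fun s => h (s • T)) t| ≤ B₂)
    (hB₂ : B₂ < r₀)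
    (hB₀ : |h 0 - h (t₀ • T₀)| ≤ B₀) :
    t₀ ≤ Real.sqrt (2 * B₀ / (r₀ - B₂)) := by
  have hgrowth : f 0 + r₀ * t₀ ^ 2 / 2 ≤ f (t₀ • T₀) :=
    apply_zero_add_mul_sq_div_two_le_apply_smul hf hfmin T₀ ht₀
      fun s hs => hfdd T₀ s hT₀ ⟨hs.1, hs.2.trans htle⟩
  have hgap : f (t₀ • T₀) - f 0 ≤ B₀ := by
    linarith [hgmin 0, le_abs_self (h 0 - h (t₀ • T₀))]
  have hB₂_nonneg : 0 ≤ B₂ := (abs_nonneg _).trans (hhdd T₀ 0 hT₀ ⟨le_rfl, ht₀.trans htle⟩)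
  have hB₀_nonneg : 0 ≤ B₀ := (abs_nonneg _).trans hB₀
  rw [Real.le_sqrt ht₀ (div_nonneg (by positivity) (sub_pos.2 hB₂).le),
    le_div_iff₀ (sub_pos.2 hB₂)]
  nlinarith [sq_nonneg t₀]

/-- Deterministic core of Theorems 4.6/4.7: under uniform bounds on the second
directional derivatives of f and h, the perturbation t₀ of the global minimum
satisfies t₀ ≤ √(2B₀/(r₀ - B₂)). -/
theorem stmt8 (f h : EuclideanSpace ℝ (Fin 2) → ℝ)
    (hf : ContDiff ℝ 2 f) (hh : ContDiff ℝ 2 h)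
    (hfmin : ∀ x, f 0 ≤ f x)
    (t₀ tb₀ r₀ B₀ B₂ : ℝ) (T₀ : EuclideanSpace ℝ (Fin 2))
    (ht₀ : 0 ≤ t₀) (hT₀ : ‖T₀‖ = 1)
    (hgmin : ∀ x, f (t₀ • T₀) + h (t₀ • T₀) ≤ f x + h x)
    (htle : t₀ ≤ tb₀) (hr₀ : 0 < r₀)
    (hfdd : ∀ (T : EuclideanSpace ℝ (Fin 2)) (t : ℝ), ‖T‖ = 1 → t ∈ Set.Icc 0 tb₀ →
      r₀ ≤ iteratedDeriv 2 (fun s => f (s • T)) t)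
    (hhdd : ∀ (T : EuclideanSpace ℝ (Fin 2)) (t : ℝ), ‖T‖ = 1 → t ∈ Set.Icc 0 tb₀ →
      |iteratedDeriv 2 (fun s => h (s • T)) t| ≤ B₂)
    (hB₂ : B₂ < r₀)
    (hB₀ : |h 0 - h (t₀ • T₀)| ≤ B₀) :
    t₀ ≤ Real.sqrt (2 * B₀ / (r₀ - B₂)) :=
  stmt8_general f h hf hfmin t₀ tb₀ r₀ B₀ B₂ T₀ ht₀ hT₀ hgmin htle hfdd hhdd hB₂ hB₀
end
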